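/- arXiv:math/0502083 — 10 statements merged into one kernel-verified Lean document; each statement's English description precedes it below -/
import Mathlib

section
/- Assume k ≠ 0 and Ω ≠ 0. Then there exist 3 × 3 matrices E and F over ℂ[X] whose determinants are nonzero constant polynomials such that Â = E · diag(1, 1, Ĝ·L̂) · F; in other words, the diagonal matrix diag(1, 1, Ĝ·L̂) is a Smith form of the Fourier-transformed linearized Euler operator Â. -/
open Polynomial Matrix Complex

/-- The transport symbol `Ĝ = ū·X + i·Ω` in `ℂ[X]`. -/
noncomputable def Ghat (ub Ω : ℝ) : Polynomial ℂ :=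
  C (ub : ℂ) * X + C (Complex.I * (Ω : ℂ))

/-- The advective wave symbol `L̂ = Ĝ² + c̄²·(k² − X²)` in `ℂ[X]`. -/
noncomputable def Lhat (ub cb k Ω : ℝ) : Polynomial ℂ :=
  Ghat ub Ω ^ 2 + C ((cb : ℂ) ^ 2) * (C ((k : ℂ) ^ 2) - X ^ 2)

/-- The Fourier-transformed linearized Euler operator as a `3 × 3` matrix over `ℂ[X]`. -/
noncomputable def eulerHat (ub cb rb k Ω : ℝ) : Matrix (Fin 3) (Fin 3) (Polynomial ℂ) :=
  !![Ghat ub Ω, C ((rb : ℂ) * (cb : ℂ) ^ 2) * X, C (Complex.I * (rb : ℂ) * (cb : ℂ) ^ 2 * (k : ℂ));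
     C ((rb : ℂ)⁻¹) * X, Ghat ub Ω, 0;
     C (Complex.I * (k : ℂ) / (rb : ℂ)), 0, Ghat ub Ω]

/-!
The first two columns of `Â`, completed by a suitable constant column `e`, form a matrix `E` of
determinant `1`: since `Ĝ(0) = iΩ ≠ 0` and the `(3,1)` entry `ik/ρ̄` is a nonzero constant, `e` can
be chosen so that the `X`-terms of the determinant cancel. Modulo the first two columns, the third
column of `Â` is then `ĜL̂ · e`; this rests on `Ĝ - ūX = iΩ` and `L̂ - Ĝ² + c̄²X² = c̄²k²`. Hence
`Â = E · diag(1, 1, ĜL̂) · F` with `F` unitriangular.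
-/

namespace Matrix

variable {R : Type*} [CommRing R]

theorem eq_updateCol_mul_diagonal_mul (A : Matrix (Fin 3) (Fin 3) R) (e : Fin 3 → R)
    (p q d : R) (h : ∀ i, A i 2 = p * A i 0 + q * A i 1 + d * e i) :
    A = A.updateCol 2 e * diagonal ![1, 1, d] * !![1, 0, p; 0, 1, q; 0, 0, 1] := by
  ext i j
  fin_cases j <;>
    simp only [mul_apply, Fin.sum_univ_three, updateCol_apply, diagonal_apply, of_apply, cons_val',
      cons_val, cons_val_zero, cons_val_one, cons_val_fin_one, Fin.isValue, Fin.reduceEq,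
      Fin.reduceFinMk, Fin.zero_eta, Fin.mk_one, if_true, if_false, h] <;>
    ring

end Matrix

section EulerSmithForm

variable (ub cb rb k Ω : ℝ)

noncomputable def eulerCompletingCol : Fin 3 → Polynomial ℂ :=
  ![C ((rb : ℂ) / (k * Ω)), C ((ub : ℂ) / (cb ^ 2 * k * Ω)), 0]

variable {ub cb rb k Ω}

theorem det_updateCol_eulerHat (hc : cb ≠ 0) (hr : rb ≠ 0) (hk : k ≠ 0) (hΩ : Ω ≠ 0) :
    ((eulerHat ub cb rb k Ω).updateCol 2 (eulerCompletingCol ub cb rb k Ω)).det = 1 := by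
  have hk' : (k : ℂ) ≠ 0 := by exact_mod_cast hk
  have hΩ' : (Ω : ℂ) ≠ 0 := by exact_mod_cast hΩ
  have hr' : (rb : ℂ) ≠ 0 := by exact_mod_cast hr
  have hc' : (cb : ℂ) ≠ 0 := by exact_mod_cast hc
  refine Polynomial.funext fun x => ?_
  simp only [det_fin_three, eulerHat, eulerCompletingCol, Ghat, updateCol_self, updateCol_ne,
    ne_eq, Fin.reduceEq, not_false_eq_true, of_apply, cons_val', cons_val, cons_val_zero,
    cons_val_one, cons_val_fin_one, Fin.isValue, eval_add, eval_sub, eval_mul, eval_C, eval_X,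
    eval_zero, eval_one]
  field_simp
  linear_combination (-(Ω * cb ^ 2 * k) : ℂ) * I_sq

theorem eulerHat_col_two (hc : cb ≠ 0) (hr : rb ≠ 0) (hk : k ≠ 0) (hΩ : Ω ≠ 0) (i : Fin 3) :
    eulerHat ub cb rb k Ω i 2 =
      C (-I * rb / k) * Ghat ub Ω * eulerHat ub cb rb k Ω i 0 +
      (C (I / k) * X - C ((ub : ℂ) / (cb ^ 2 * k * Ω)) * Lhat ub cb k Ω) *
        eulerHat ub cb rb k Ω i 1 +
      Ghat ub Ω * Lhat ub cb k Ω * eulerCompletingCol ub cb rb k Ω i := by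
  have hk' : (k : ℂ) ≠ 0 := by exact_mod_cast hk
  have hΩ' : (Ω : ℂ) ≠ 0 := by exact_mod_cast hΩ
  have hr' : (rb : ℂ) ≠ 0 := by exact_mod_cast hr
  have hc' : (cb : ℂ) ≠ 0 := by exact_mod_cast hc
  refine Polynomial.funext fun x => ?_
  fin_cases i <;>
    simp only [eulerHat, eulerCompletingCol, Ghat, Lhat, of_apply, cons_val', cons_val,
      cons_val_zero, cons_val_one, cons_val_fin_one, Fin.isValue, Fin.reduceFinMk, Fin.zero_eta,
      Fin.mk_one, eval_add, eval_sub, eval_mul, eval_pow, eval_C, eval_X, eval_zero, mul_zero,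
      add_zero] <;>
    field_simp
  · ring
  · ring
  · linear_combination (ub * x + I * Ω) * I_sq

end EulerSmithForm

theorem euler_smith_form_general (ub vb cb rb ω k : ℝ)
    (hc : 0 < cb) (hr : 0 < rb)
    (hk : k ≠ 0) (hΩ : ω + k * vb ≠ 0) :
    ∃ E F : Matrix (Fin 3) (Fin 3) (Polynomial ℂ),
      (∃ e : ℂ, e ≠ 0 ∧ E.det = C e) ∧
      (∃ f : ℂ, f ≠ 0 ∧ F.det = C f) ∧
      eulerHat ub cb rb k (ω + k * vb) =
        E * Matrix.diagonal ![1, 1, Ghat ub (ω + k * vb) * Lhat ub cb k (ω + k * vb)] * F := by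
  refine ⟨_, _, ⟨1, one_ne_zero, ?_⟩, ⟨1, one_ne_zero, ?_⟩,
    Matrix.eq_updateCol_mul_diagonal_mul _ _ _ _ _
      (eulerHat_col_two hc.ne' hr.ne' hk hΩ)⟩
  · rw [det_updateCol_eulerHat hc.ne' hr.ne' hk hΩ, C_1]
  · simp [Matrix.det_fin_three]

/-- For `k ≠ 0` and `Ω ≠ 0` (subsonic flow), the diagonal matrix `diag(1, 1, Ĝ·L̂)` is a
Smith form of the Fourier-transformed linearized Euler operator `Â`: there exist matrices
`E`, `F` over `ℂ[X]` with nonzero constant determinants such that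
`Â = E · diag(1, 1, Ĝ·L̂) · F`. -/
theorem euler_smith_form (ub vb cb rb ω k : ℝ)
    (hc : 0 < cb) (hr : 0 < rb) (hsub : ub ^ 2 < cb ^ 2)
    (hk : k ≠ 0) (hΩ : ω + k * vb ≠ 0) :
    ∃ E F : Matrix (Fin 3) (Fin 3) (Polynomial ℂ),
      (∃ e : ℂ, e ≠ 0 ∧ E.det = C e) ∧
      (∃ f : ℂ, f ≠ 0 ∧ F.det = C f) ∧
      eulerHat ub cb rb k (ω + k * vb) =
        E * Matrix.diagonal ![1, 1, Ghat ub (ω + k * vb) * Lhat ub cb k (ω + k * vb)] * F :=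
  euler_smith_form_general ub vb cb rb ω k hc hr hk hΩ
end

section
/- Assume k ≠ 0, Ω ≠ 0 and ū ≠ 0, and let F be the explicit matrix of the paper's Smith factorization, F = −[[Ĝ/(i·k·ρ̄·c̄²), X/(i·k), 1], [X/(ρ̄·ū), Ĝ/ū, 0], [ū/(i·Ω), ρ̄·ū²/(i·Ω), 0]], a 3 × 3 matrix over ℂ[X]. Then det F = 1; consequently F is invertible over ℂ[X] with inverse equal to its adjugate, and the (1,3) entry of F⁻¹ satisfies ū · (adjugate F)₁₃ = −Ĝ, i.e. the (1,3) entry of F⁻¹ equals −Ĝ/ū (so that, up to sign, it is the transport symbol divided by ū, as used in the paper's mode analysis). -/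
open Polynomial Matrix Complex

noncomputable def Fmat (ub cb rb k Ω : ℝ) : Matrix (Fin 3) (Fin 3) (Polynomial ℂ) :=
  -(!![C ((Complex.I * (k : ℂ) * (rb : ℂ) * (cb : ℂ) ^ 2)⁻¹) * Ghat ub Ω,
       C ((Complex.I * (k : ℂ))⁻¹) * X, 1;
       C (((rb : ℂ) * (ub : ℂ))⁻¹) * X, C ((ub : ℂ)⁻¹) * Ghat ub Ω, 0;
       C ((ub : ℂ) / (Complex.I * (Ω : ℂ))), C ((rb : ℂ) * (ub : ℂ) ^ 2 / (Complex.I * (Ω : ℂ))), 0])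

/-- For `k ≠ 0`, `Ω ≠ 0`, `ū ≠ 0`: `det F = 1`, hence `F` is invertible over `ℂ[X]` with
inverse equal to its adjugate, and the `(1,3)` entry of `F⁻¹` satisfies
`ū · (adjugate F)₁₃ = −Ĝ`, i.e. `(F⁻¹)₁₃ = −Ĝ/ū`. -/
theorem Fmat_det_one_and_inv_entry (ub vb cb rb ω k : ℝ)
    (hc : 0 < cb) (hr : 0 < rb) (hu : ub ≠ 0)
    (hk : k ≠ 0) (hΩ : ω + k * vb ≠ 0) :
    (Fmat ub cb rb k (ω + k * vb)).det = 1 ∧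
    Fmat ub cb rb k (ω + k * vb) * (Fmat ub cb rb k (ω + k * vb)).adjugate = 1 ∧
    C (ub : ℂ) * (Fmat ub cb rb k (ω + k * vb)).adjugate 0 2 = -Ghat ub (ω + k * vb) := by
  have hu' : (ub : ℂ) ≠ 0 := by exact_mod_cast hu
  have hr' : (rb : ℂ) ≠ 0 := by exact_mod_cast hr.ne'
  have hΩ' : ((ω : ℂ) + (k : ℂ) * (vb : ℂ)) ≠ 0 := by exact_mod_cast hΩ
  have hI : Complex.I ≠ 0 := Complex.I_ne_zero
  have hd : Complex.I * (ω : ℂ) + Complex.I * (k : ℂ) * (vb : ℂ) ≠ 0 := by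
    have := mul_ne_zero hI hΩ'
    intro h; apply this; rw [← h]; ring
  have hd2 : (rb : ℂ) * (ub : ℂ) * Complex.I * (ω : ℂ)
      + (rb : ℂ) * (ub : ℂ) * Complex.I * (k : ℂ) * (vb : ℂ) ≠ 0 := by
    have := mul_ne_zero (mul_ne_zero (mul_ne_zero hr' hu') hI) hΩ'
    intro h; apply this; rw [← h]; ring
  have hdet : (Fmat ub cb rb k (ω + k * vb)).det = 1 := by
    apply Polynomial.funext
    intro x
    simp [Fmat, Ghat, Matrix.det_fin_three, Matrix.vecHead, Matrix.vecTail]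
    field_simp
    ring
  refine ⟨hdet, by rw [Matrix.mul_adjugate, hdet, one_smul], ?_⟩
  have hadj : (Fmat ub cb rb k (ω + k * vb)).adjugate 0 2 =
      Fmat ub cb rb k (ω + k * vb) 0 1 * Fmat ub cb rb k (ω + k * vb) 1 2 -
      Fmat ub cb rb k (ω + k * vb) 0 2 * Fmat ub cb rb k (ω + k * vb) 1 1 := by
    rw [Matrix.adjugate_fin_three]
    simp
  rw [hadj]
  apply Polynomial.funext
  intro x
  simp [Fmat, Ghat, Matrix.vecHead, Matrix.vecTail]
  field_simp
  ring
end

section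
/- Assume ū² < c̄² and the evanescent condition k²·(c̄² − ū²) > Ω². Set λ₂ = (i·ū·Ω − c̄·√(k²·(c̄² − ū²) − Ω²))/(c̄² − ū²) and λ₃ = (i·ū·Ω + c̄·√(k²·(c̄² − ū²) − Ω²))/(c̄² − ū²) (real square root). Then the advective wave symbol factors as L̂ = −(c̄² − ū²)·(X − λ₂)·(X − λ₃) in ℂ[X], and Re λ₂ < 0 < Re λ₃; consequently the mode x ↦ e^{λ₂x} tends to 0 and the mode x ↦ e^{λ₃x} is unbounded as x → +∞ (so boundedness of a solution on the right half line forces the coefficient of the third mode to vanish). -/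
open Polynomial Matrix Complex Filter

/-- In the evanescent regime `k²(c̄² − ū²) > Ω²` (subsonic), the advective wave symbol
factors as `L̂ = −(c̄² − ū²)(X − λ₂)(X − λ₃)` with
`λ₂ = (iūΩ − c̄√(k²(c̄²−ū²) − Ω²))/(c̄² − ū²)`, `λ₃ = (iūΩ + c̄√(k²(c̄²−ū²) − Ω²))/(c̄² − ū²)`,
and `Re λ₂ < 0 < Re λ₃`; consequently `e^{λ₂x} → 0` and `e^{λ₃x}` is unbounded as
`x → +∞`. -/
theorem Lhat_factor_evanescent (ub vb cb rb ω k : ℝ)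
    (hc : 0 < cb) (hr : 0 < rb) (hsub : ub ^ 2 < cb ^ 2)
    (hevan : (ω + k * vb) ^ 2 < k ^ 2 * (cb ^ 2 - ub ^ 2)) :
    let Ω : ℝ := ω + k * vb
    let lam₂ : ℂ := (Complex.I * (ub : ℂ) * (Ω : ℂ) -
        (cb : ℂ) * (Real.sqrt (k ^ 2 * (cb ^ 2 - ub ^ 2) - Ω ^ 2) : ℂ)) /
      ((cb : ℂ) ^ 2 - (ub : ℂ) ^ 2)
    let lam₃ : ℂ := (Complex.I * (ub : ℂ) * (Ω : ℂ) +
        (cb : ℂ) * (Real.sqrt (k ^ 2 * (cb ^ 2 - ub ^ 2) - Ω ^ 2) : ℂ)) /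
      ((cb : ℂ) ^ 2 - (ub : ℂ) ^ 2)
    Lhat ub cb k Ω = C (-((cb : ℂ) ^ 2 - (ub : ℂ) ^ 2)) * (X - C lam₂) * (X - C lam₃) ∧
    lam₂.re < 0 ∧ 0 < lam₃.re ∧
    Tendsto (fun x : ℝ => Complex.exp (lam₂ * x)) atTop (nhds 0) ∧
    Tendsto (fun x : ℝ => ‖Complex.exp (lam₃ * x)‖) atTop atTop := by
  intro Ω lam₂ lam₃
  set a : ℝ := Real.sqrt (k ^ 2 * (cb ^ 2 - ub ^ 2) - Ω ^ 2) with ha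
  have hd : (0:ℝ) < cb ^ 2 - ub ^ 2 := by nlinarith
  have hevan' : Ω ^ 2 < k ^ 2 * (cb ^ 2 - ub ^ 2) := hevan
  have hpos : (0:ℝ) < k ^ 2 * (cb ^ 2 - ub ^ 2) - Ω ^ 2 := by linarith
  have ha2 : a ^ 2 = k ^ 2 * (cb ^ 2 - ub ^ 2) - Ω ^ 2 := Real.sq_sqrt hpos.le
  have hapos : 0 < a := Real.sqrt_pos.mpr hpos
  have hdC : ((cb:ℂ) ^ 2 - (ub:ℂ) ^ 2) ≠ 0 := by
    have : ((cb:ℂ) ^ 2 - (ub:ℂ) ^ 2) = ((cb ^ 2 - ub ^ 2 : ℝ) : ℂ) := by push_cast; ring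
    rw [this]
    exact_mod_cast hd.ne'
  have ha2C : ((a:ℂ)) ^ 2 = (k:ℂ) ^ 2 * ((cb:ℂ) ^ 2 - (ub:ℂ) ^ 2) - (Ω:ℂ) ^ 2 := by
    exact_mod_cast congrArg (fun t : ℝ => (t:ℂ)) ha2
  have hre₂ : lam₂.re = -(cb * a) / (cb ^ 2 - ub ^ 2) := by
    have : lam₂ = ((-(cb * a) / (cb ^ 2 - ub ^ 2) : ℝ) : ℂ) +
        ((ub * Ω / (cb ^ 2 - ub ^ 2) : ℝ) : ℂ) * Complex.I := by
      show (Complex.I * (ub : ℂ) * (Ω : ℂ) - (cb : ℂ) * (a : ℂ)) /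
          ((cb : ℂ) ^ 2 - (ub : ℂ) ^ 2) = _
      rw [div_eq_iff hdC]
      push_cast
      field_simp
      ring
    rw [this]
    simp only [Complex.add_re, Complex.mul_re, Complex.ofReal_re, Complex.ofReal_im,
      Complex.I_re, Complex.I_im, mul_zero, zero_mul, mul_one, sub_zero, add_zero]
  have hre₃ : lam₃.re = (cb * a) / (cb ^ 2 - ub ^ 2) := by
    have : lam₃ = (((cb * a) / (cb ^ 2 - ub ^ 2) : ℝ) : ℂ) +
        ((ub * Ω / (cb ^ 2 - ub ^ 2) : ℝ) : ℂ) * Complex.I := by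
      show (Complex.I * (ub : ℂ) * (Ω : ℂ) + (cb : ℂ) * (a : ℂ)) /
          ((cb : ℂ) ^ 2 - (ub : ℂ) ^ 2) = _
      rw [div_eq_iff hdC]
      push_cast
      field_simp
      ring
    rw [this]
    simp only [Complex.add_re, Complex.mul_re, Complex.ofReal_re, Complex.ofReal_im,
      Complex.I_re, Complex.I_im, mul_zero, zero_mul, mul_one, sub_zero, add_zero]
  have hca : 0 < cb * a := mul_pos hc hapos
  have h2 : lam₂.re < 0 := by rw [hre₂]; exact div_neg_of_neg_of_pos (by linarith) hd
  have h3 : 0 < lam₃.re := by rw [hre₃]; exact div_pos hca hd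
  refine ⟨?_, h2, h3, ?_, ?_⟩
  · apply Polynomial.funext
    intro z
    simp only [Lhat, Ghat, eval_add, eval_mul, eval_sub, eval_pow, eval_C, eval_X]
    show ((ub:ℂ) * z + Complex.I * (Ω:ℂ)) ^ 2 +
        (cb:ℂ) ^ 2 * ((k:ℂ) ^ 2 - z ^ 2) =
      -((cb:ℂ) ^ 2 - (ub:ℂ) ^ 2) * (z - (Complex.I * (ub : ℂ) * (Ω : ℂ) -
        (cb : ℂ) * (a : ℂ)) / ((cb : ℂ) ^ 2 - (ub : ℂ) ^ 2)) *
      (z - (Complex.I * (ub : ℂ) * (Ω : ℂ) + (cb : ℂ) * (a : ℂ)) /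
        ((cb : ℂ) ^ 2 - (ub : ℂ) ^ 2))
    field_simp
    ring_nf
    simp only [Complex.I_sq]
    ring_nf
    linear_combination (-(cb:ℂ)^2) * ha2C
  · rw [tendsto_zero_iff_norm_tendsto_zero]
    have hnorm : ∀ x : ℝ, ‖Complex.exp (lam₂ * x)‖ = Real.exp (lam₂.re * x) := by
      intro x
      rw [Complex.norm_exp]
      congr 1
      simp [Complex.mul_re]
    simp only [hnorm]
    have : Tendsto (fun x : ℝ => lam₂.re * x) atTop atBot :=
      tendsto_id.const_mul_atTop_of_neg h2
    exact Real.tendsto_exp_atBot.comp this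
  · have hnorm : ∀ x : ℝ, ‖Complex.exp (lam₃ * x)‖ = Real.exp (lam₃.re * x) := by
      intro x
      rw [Complex.norm_exp]
      congr 1
      simp [Complex.mul_re]
    simp only [hnorm]
    have : Tendsto (fun x : ℝ => lam₃.re * x) atTop atTop :=
      tendsto_id.const_mul_atTop h3
    exact Real.tendsto_exp_atTop.comp this
end

section
/- Assume ū ≠ 0 and ū² < c̄². Let λ₁ = −i·Ω/ū and let λ₂, λ₃ ∈ ℂ be the two roots of L̂ (so L̂ = −(c̄² − ū²)·(X − λ₂)·(X − λ₃)), and assume λ₁, λ₂, λ₃ are pairwise distinct. Let p, u, v : ℝ → ℂ be infinitely differentiable functions satisfying, for all x ∈ ℝ, the Fourier-transformed linearized Euler system: i·ω·p + ū·p′ + i·k·v̄·p + ρ̄·c̄²·u′ + i·ρ̄·c̄²·k·v = 0, (1/ρ̄)·p′ + i·ω·u + ū·u′ + i·k·v̄·u = 0, and (i·k/ρ̄)·p + i·ω·v + ū·v′ + i·k·v̄·v = 0. Then each of p, u, v is a linear combination of the three exponential modes x ↦ e^{λ₁x}, x ↦ e^{λ₂x}, x ↦ e^{λ₃x}. -/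
open Polynomial Matrix Complex

lemma exp_hasDerivAt (a : ℂ) (t : ℝ) :
    HasDerivAt (fun s : ℝ => Complex.exp (a * s)) (a * Complex.exp (a * t)) t := by
  have h1 : HasDerivAt (fun s : ℝ => (s : ℂ)) 1 t := by
    simpa using (hasDerivAt_id t).ofReal_comp
  have h2 : HasDerivAt (fun s : ℝ => a * (s : ℂ)) a t := by simpa using h1.const_mul a
  simpa [mul_comm] using h2.cexp

lemma hom_sol (a : ℂ) (f : ℝ → ℂ) (hf : Differentiable ℝ f)
    (h : ∀ x, deriv f x = a * f x) : ∀ x, f x = f 0 * Complex.exp (a * x) := by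
  have key : ∀ y : ℝ, f y * Complex.exp (-a * y) = f 0 * Complex.exp (-a * 0) := by
    intro y
    apply is_const_of_deriv_eq_zero (f := fun t : ℝ => f t * Complex.exp (-a * t))
    · exact hf.mul (fun t => (exp_hasDerivAt (-a) t).differentiableAt)
    · intro t
      have h1 : HasDerivAt f (a * f t) t := by rw [← h t]; exact (hf t).hasDerivAt
      have h2 := exp_hasDerivAt (-a) t
      have := (h1.mul h2).deriv
      rw [show (fun t : ℝ => f t * Complex.exp (-a * t)) = (f * fun s : ℝ => Complex.exp (-a * s)) from rfl, this]; ring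
  intro x
  have := key x
  have hne : Complex.exp (-a * x) ≠ 0 := Complex.exp_ne_zero _
  have hx : Complex.exp (a * x) * Complex.exp (-a * x) = 1 := by
    rw [← Complex.exp_add]; ring_nf; exact Complex.exp_zero
  simp at this
  calc f x = f x * (Complex.exp (-a*x) * Complex.exp (a*x)) := by
        rw [mul_comm (Complex.exp (-a*x)), hx]; ring
    _ = (f x * Complex.exp (-(a*x))) * Complex.exp (a*x) := by ring_nf
    _ = f 0 * Complex.exp (a*x) := by rw [this]

lemma inhom_sol (a b₂ b₃ c₂ c₃ : ℂ) (h₂ : b₂ ≠ a) (h₃ : b₃ ≠ a) (f : ℝ → ℂ)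
    (hf : Differentiable ℝ f)
    (h : ∀ x, deriv f x = a * f x + c₂ * Complex.exp (b₂ * x) + c₃ * Complex.exp (b₃ * x)) :
    ∃ d₁ d₂ d₃ : ℂ, ∀ x, f x = d₁ * Complex.exp (a * x) + d₂ * Complex.exp (b₂ * x)
      + d₃ * Complex.exp (b₃ * x) := by
  set g : ℝ → ℂ := fun x => f x - c₂/(b₂-a) * Complex.exp (b₂*x) - c₃/(b₃-a) * Complex.exp (b₃*x)
    with hg
  have hgd : Differentiable ℝ g := by
    apply Differentiable.sub
    apply Differentiable.sub hf
    · exact fun t => ((exp_hasDerivAt b₂ t).differentiableAt.const_mul _)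
    · exact fun t => ((exp_hasDerivAt b₃ t).differentiableAt.const_mul _)
  have h2 : (b₂ - a) ≠ 0 := sub_ne_zero.mpr h₂
  have h3 : (b₃ - a) ≠ 0 := sub_ne_zero.mpr h₃
  have hderiv : ∀ x, deriv g x = a * g x := by
    intro x
    have hfa : HasDerivAt f (deriv f x) x := (hf x).hasDerivAt
    have hgderiv : HasDerivAt g (deriv f x - c₂/(b₂-a) * (b₂ * Complex.exp (b₂*x))
        - c₃/(b₃-a) * (b₃ * Complex.exp (b₃*x))) x :=
      (hfa.sub ((exp_hasDerivAt b₂ x).const_mul _)).sub ((exp_hasDerivAt b₃ x).const_mul _)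
    rw [hgderiv.deriv, h x, hg]
    field_simp
    ring
  have := hom_sol a g hgd hderiv
  refine ⟨g 0, c₂/(b₂-a), c₃/(b₃-a), fun x => ?_⟩
  have hx := this x
  rw [hg] at hx ⊢
  simp only at hx ⊢
  linear_combination hx

lemma second_order_sol (l₂ l₃ : ℂ) (h23 : l₂ ≠ l₃) (f : ℝ → ℂ) (hf : ContDiff ℝ (⊤ : ℕ∞) f)
    (h : ∀ x, deriv (deriv f) x = (l₂ + l₃) * deriv f x - l₂ * l₃ * f x) :
    ∃ d₂ d₃ : ℂ, ∀ x, f x = d₂ * Complex.exp (l₂ * x) + d₃ * Complex.exp (l₃ * x) := by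
  have hf2 : ContDiff ℝ ((⊤:ℕ∞) : WithTop ℕ∞) f := hf.of_le (by simp)
  obtain ⟨hfd, hfd'⟩ := contDiff_infty_iff_deriv.mp hf2
  have hfd2 : Differentiable ℝ (deriv f) := (contDiff_infty_iff_deriv.mp hfd').1
  set g : ℝ → ℂ := fun x => deriv f x - l₃ * f x with hg
  have hgd : Differentiable ℝ g := hfd2.sub (hfd.const_mul _)
  have hderiv : ∀ x, deriv g x = l₂ * g x := by
    intro x
    have h1 : HasDerivAt g (deriv (deriv f) x - l₃ * deriv f x) x :=
      (hfd2 x).hasDerivAt.sub (((hfd x).hasDerivAt).const_mul _)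
    rw [h1.deriv, h x, hg]; ring
  have hgsol := hom_sol l₂ g hgd hderiv
  have hfderiv : ∀ x, deriv f x = l₃ * f x + g 0 * Complex.exp (l₂ * x)
      + 0 * Complex.exp (l₂ * x) := by
    intro x
    have := hgsol x
    rw [hg] at this
    simp only at this
    linear_combination this
  obtain ⟨d₁, d₂, d₃, hsol⟩ := inhom_sol l₃ l₂ l₂ (g 0) 0 h23 h23 f hfd hfderiv
  exact ⟨d₂ + d₃, d₁, fun x => by rw [hsol x]; ring⟩

lemma coeff_ids (ub cb k Ω : ℝ) (lam₂ lam₃ : ℂ)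
    (hfac : Lhat ub cb k Ω = C (-((cb:ℂ)^2 - (ub:ℂ)^2)) * (X - C lam₂) * (X - C lam₃)) :
    2*Complex.I*(Ω:ℂ)*(ub:ℂ) = ((cb:ℂ)^2-(ub:ℂ)^2)*(lam₂+lam₃) ∧
    (cb:ℂ)^2*(k:ℂ)^2-(Ω:ℂ)^2 = -((cb:ℂ)^2-(ub:ℂ)^2)*(lam₂*lam₃) := by
  have h0 := congrArg (Polynomial.eval (0:ℂ)) hfac
  have h1 := congrArg (Polynomial.eval (1:ℂ)) hfac
  have hm1 := congrArg (Polynomial.eval (-1:ℂ)) hfac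
  simp [Lhat, Ghat] at h0 h1 hm1
  constructor
  · linear_combination (1/2 : ℂ) * h1 - (1/2 : ℂ) * hm1
  · linear_combination h0 - (Ω:ℂ)^2 * Complex.I_sq
/-- Every smooth solution `(p, u, v)` of the Fourier-transformed linearized Euler system is,
componentwise, a linear combination of the three exponential modes `e^{λ₁x}, e^{λ₂x}, e^{λ₃x}`,
where `λ₁ = −iΩ/ū` is the transport exponent and `λ₂, λ₃` are the two roots of `L̂`. -/
theorem euler_solutions_are_modes (ub vb cb rb ω k : ℝ)
    (hu : ub ≠ 0) (hsub : ub ^ 2 < cb ^ 2)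
    (lam₁ lam₂ lam₃ : ℂ)
    (hlam₁ : lam₁ = -(Complex.I * ((ω + k * vb : ℝ) : ℂ)) / (ub : ℂ))
    (hfac : Lhat ub cb k (ω + k * vb) =
      C (-((cb : ℂ) ^ 2 - (ub : ℂ) ^ 2)) * (X - C lam₂) * (X - C lam₃))
    (hd12 : lam₁ ≠ lam₂) (hd13 : lam₁ ≠ lam₃) (hd23 : lam₂ ≠ lam₃)
    (p u v : ℝ → ℂ)
    (hp : ContDiff ℝ (⊤ : ℕ∞) p) (hu' : ContDiff ℝ (⊤ : ℕ∞) u) (hv : ContDiff ℝ (⊤ : ℕ∞) v)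
    (heq1 : ∀ x : ℝ, Complex.I * (ω : ℂ) * p x + (ub : ℂ) * deriv p x +
      Complex.I * (k : ℂ) * (vb : ℂ) * p x + (rb : ℂ) * (cb : ℂ) ^ 2 * deriv u x +
      Complex.I * (rb : ℂ) * (cb : ℂ) ^ 2 * (k : ℂ) * v x = 0)
    (heq2 : ∀ x : ℝ, (rb : ℂ)⁻¹ * deriv p x + Complex.I * (ω : ℂ) * u x +
      (ub : ℂ) * deriv u x + Complex.I * (k : ℂ) * (vb : ℂ) * u x = 0)
    (heq3 : ∀ x : ℝ, Complex.I * (k : ℂ) / (rb : ℂ) * p x + Complex.I * (ω : ℂ) * v x +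
      (ub : ℂ) * deriv v x + Complex.I * (k : ℂ) * (vb : ℂ) * v x = 0) :
    (∃ a₁ a₂ a₃ : ℂ, ∀ x : ℝ, p x = a₁ * Complex.exp (lam₁ * x) +
      a₂ * Complex.exp (lam₂ * x) + a₃ * Complex.exp (lam₃ * x)) ∧
    (∃ b₁ b₂ b₃ : ℂ, ∀ x : ℝ, u x = b₁ * Complex.exp (lam₁ * x) +
      b₂ * Complex.exp (lam₂ * x) + b₃ * Complex.exp (lam₃ * x)) ∧
    (∃ c₁ c₂ c₃ : ℂ, ∀ x : ℝ, v x = c₁ * Complex.exp (lam₁ * x) +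
      c₂ * Complex.exp (lam₂ * x) + c₃ * Complex.exp (lam₃ * x)) := by
  have hubC : (ub : ℂ) ≠ 0 := Complex.ofReal_ne_zero.mpr hu
  obtain ⟨hsum, hprod⟩ := coeff_ids ub cb k (ω + k * vb) lam₂ lam₃ hfac
  push_cast at hsum hprod hlam₁
  have hne : ((cb:ℂ)^2 - (ub:ℂ)^2) ≠ 0 := by
    have h : ((cb:ℂ)^2 - (ub:ℂ)^2) = ((cb^2 - ub^2 : ℝ) : ℂ) := by push_cast; ring
    rw [h]
    exact Complex.ofReal_ne_zero.mpr (ne_of_gt (by linarith))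
  obtain ⟨hpd, hp'⟩ := contDiff_infty_iff_deriv.mp (hp.of_le (by simp))
  have hpd2 : Differentiable ℝ (deriv p) := (contDiff_infty_iff_deriv.mp hp').1
  obtain ⟨hud, hu2'⟩ := contDiff_infty_iff_deriv.mp (hu'.of_le (by simp))
  have hud2 : Differentiable ℝ (deriv u) := (contDiff_infty_iff_deriv.mp hu2').1
  obtain ⟨hvd, hv2'⟩ := contDiff_infty_iff_deriv.mp (hv.of_le (by simp))
  have hvd2 : Differentiable ℝ (deriv v) := (contDiff_infty_iff_deriv.mp hv2').1
  rcases eq_or_ne rb 0 with hrb | hrb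
  · -- degenerate case: everything is a pure transport mode
    subst hrb
    push_cast at heq1 heq2 heq3
    simp only [_root_.inv_zero, zero_mul, mul_zero, zero_add, add_zero, div_zero] at heq1 heq2 heq3
    have hp1 : ∀ x, deriv p x = lam₁ * p x := by
      intro x
      rw [hlam₁]
      field_simp
      linear_combination heq1 x
    have hu1 : ∀ x, deriv u x = lam₁ * u x := by
      intro x
      rw [hlam₁]
      field_simp
      linear_combination heq2 x
    have hv1 : ∀ x, deriv v x = lam₁ * v x := by
      intro x
      rw [hlam₁]
      field_simp
      linear_combination heq3 x
    refine ⟨⟨p 0, 0, 0, fun x => ?_⟩, ⟨u 0, 0, 0, fun x => ?_⟩, ⟨v 0, 0, 0, fun x => ?_⟩⟩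
    · rw [hom_sol lam₁ p hpd hp1 x]; ring
    · rw [hom_sol lam₁ u hud hu1 x]; ring
    · rw [hom_sol lam₁ v hvd hv1 x]; ring
  · have hrbC : (rb : ℂ) ≠ 0 := Complex.ofReal_ne_zero.mpr hrb
    -- division-free forms
    have h2' : ∀ x, deriv p x = -((rb:ℂ) * (Complex.I * ((ω:ℂ) + (k:ℂ)*(vb:ℂ))) * u x)
        - (rb:ℂ) * (ub:ℂ) * deriv u x := by
      intro x
      have h := heq2 x
      field_simp at h
      linear_combination h
    have h3' : ∀ x, Complex.I * (k:ℂ) * p x = -((rb:ℂ) * (Complex.I * ((ω:ℂ) + (k:ℂ)*(vb:ℂ))) * v x)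
        - (rb:ℂ) * (ub:ℂ) * deriv v x := by
      intro x
      have h := heq3 x
      field_simp at h
      linear_combination h
    have h2'' : ∀ x, deriv (deriv p) x = -((rb:ℂ) * (Complex.I * ((ω:ℂ) + (k:ℂ)*(vb:ℂ))) * deriv u x)
        - (rb:ℂ) * (ub:ℂ) * deriv (deriv u) x := by
      intro x
      have hfun : deriv p = fun x => -((rb:ℂ) * (Complex.I * ((ω:ℂ) + (k:ℂ)*(vb:ℂ))) * u x)
          - (rb:ℂ) * (ub:ℂ) * deriv u x := funext h2'
      rw [hfun]
      exact ((((hud x).hasDerivAt.const_mul _).neg).sub ((hud2 x).hasDerivAt.const_mul _)).deriv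
    have h1' : ∀ x, Complex.I * (ω : ℂ) * deriv p x + (ub : ℂ) * deriv (deriv p) x +
        Complex.I * (k : ℂ) * (vb : ℂ) * deriv p x + (rb : ℂ) * (cb : ℂ) ^ 2 * deriv (deriv u) x +
        Complex.I * (rb : ℂ) * (cb : ℂ) ^ 2 * (k : ℂ) * deriv v x = 0 := by
      intro x
      have hzero : (fun x => Complex.I * (ω : ℂ) * p x + (ub : ℂ) * deriv p x +
          Complex.I * (k : ℂ) * (vb : ℂ) * p x + (rb : ℂ) * (cb : ℂ) ^ 2 * deriv u x +
          Complex.I * (rb : ℂ) * (cb : ℂ) ^ 2 * (k : ℂ) * v x) = fun _ => (0:ℂ) := funext heq1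
      have hD : HasDerivAt (fun x => Complex.I * (ω : ℂ) * p x + (ub : ℂ) * deriv p x +
          Complex.I * (k : ℂ) * (vb : ℂ) * p x + (rb : ℂ) * (cb : ℂ) ^ 2 * deriv u x +
          Complex.I * (rb : ℂ) * (cb : ℂ) ^ 2 * (k : ℂ) * v x)
          (Complex.I * (ω : ℂ) * deriv p x + (ub : ℂ) * deriv (deriv p) x +
          Complex.I * (k : ℂ) * (vb : ℂ) * deriv p x + (rb : ℂ) * (cb : ℂ) ^ 2 * deriv (deriv u) x +
          Complex.I * (rb : ℂ) * (cb : ℂ) ^ 2 * (k : ℂ) * deriv v x) x :=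
        (((((hpd x).hasDerivAt.const_mul _).add ((hpd2 x).hasDerivAt.const_mul _)).add
          ((hpd x).hasDerivAt.const_mul _)).add ((hud2 x).hasDerivAt.const_mul _)).add
          ((hvd x).hasDerivAt.const_mul _)
      have hD2 := hD.deriv
      rw [hzero] at hD2
      simpa using hD2.symm
    -- the scalar second-order ODE for p
    have hpp : ∀ x, deriv (deriv p) x = (lam₂ + lam₃) * deriv p x - lam₂ * lam₃ * p x := by
      intro x
      apply mul_left_cancel₀ hne
      linear_combination (deriv p x) * hsum + (p x) * hprod - (ub:ℂ) * h1' x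
        - (Complex.I * ((ω:ℂ) + (k:ℂ)*(vb:ℂ))) * heq1 x + (cb:ℂ)^2 * h2'' x
        + Complex.I * (cb:ℂ)^2 * (k:ℂ) * h3' x
        + (((ω:ℂ) + (k:ℂ)*(vb:ℂ))^2 - (cb:ℂ)^2*(k:ℂ)^2) * (p x) * Complex.I_sq
    obtain ⟨d₂, d₃, hpsol⟩ := second_order_sol lam₂ lam₃ hd23 p hp hpp
    have hdp : ∀ x, deriv p x = d₂ * lam₂ * Complex.exp (lam₂ * x)
        + d₃ * lam₃ * Complex.exp (lam₃ * x) := by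
      intro x
      have hfun : p = fun x : ℝ => d₂ * Complex.exp (lam₂*x) + d₃ * Complex.exp (lam₃*x) := funext hpsol
      rw [hfun]
      have := (((exp_hasDerivAt lam₂ x).const_mul d₂).add
        ((exp_hasDerivAt lam₃ x).const_mul d₃)).deriv
      rw [show (fun x : ℝ => d₂ * Complex.exp (lam₂*x) + d₃ * Complex.exp (lam₃*x)) = ((fun y : ℝ => d₂ * Complex.exp (lam₂*y)) + fun y : ℝ => d₃ * Complex.exp (lam₃*y)) from rfl, this]; ring
    refine ⟨⟨0, d₂, d₃, fun x => by rw [hpsol x]; ring⟩, ?_, ?_⟩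
    · -- u
      have hueq : ∀ x, deriv u x = lam₁ * u x
          + (-(d₂ * lam₂) / ((rb:ℂ)*(ub:ℂ))) * Complex.exp (lam₂ * x)
          + (-(d₃ * lam₃) / ((rb:ℂ)*(ub:ℂ))) * Complex.exp (lam₃ * x) := by
        intro x
        have h := heq2 x
        rw [hdp x] at h
        rw [hlam₁]
        field_simp at h ⊢
        linear_combination h
      obtain ⟨b₁, b₂, b₃, hb⟩ := inhom_sol lam₁ lam₂ lam₃ _ _ hd12.symm hd13.symm u hud hueq
      exact ⟨b₁, b₂, b₃, hb⟩
    · -- v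
      have hveq : ∀ x, deriv v x = lam₁ * v x
          + (-(Complex.I * (k:ℂ) * d₂) / ((rb:ℂ)*(ub:ℂ))) * Complex.exp (lam₂ * x)
          + (-(Complex.I * (k:ℂ) * d₃) / ((rb:ℂ)*(ub:ℂ))) * Complex.exp (lam₃ * x) := by
        intro x
        have h := heq3 x
        rw [hpsol x] at h
        rw [hlam₁]
        field_simp at h ⊢
        linear_combination h
      obtain ⟨c₁, c₂, c₃, hc⟩ := inhom_sol lam₁ lam₂ lam₃ _ _ hd12.symm hd13.symm v hvd hveq
      exact ⟨c₁, c₂, c₃, hc⟩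
end

section
/- Let λ₁, λ₂, λ₃ ∈ ℂ be pairwise distinct, let λ₂ᵖᵐˡ, λ₃ᵖᵐˡ, a ∈ ℂ with a ≠ 0, λ₂ᵖᵐˡ ≠ λ₁ and λ₃ᵖᵐˡ ≠ λ₁, and let α₁, α₂ ∈ ℂ be given. Suppose α₃, β₁, β₂ ∈ ℂ satisfy the interface system of the first PML model: (i) α₁·(λ₁ − λ₂)·(λ₁ − λ₃) = β₁·a²·(λ₁ − λ₂ᵖᵐˡ)·(λ₁ − λ₃ᵖᵐˡ); (ii) α₂·(λ₂ − λ₁) + α₃·(λ₃ − λ₁) = β₂·(λ₂ᵖᵐˡ − λ₁); (iii) α₂·(λ₂ − λ₁)·λ₂ + α₃·(λ₃ − λ₁)·λ₃ = β₂·(λ₂ᵖᵐˡ − λ₁)·λ₂. Then α₃ = 0, β₂ = α₂·(λ₂ − λ₁)/(λ₂ᵖᵐˡ − λ₁), and β₁ = α₁·(λ₁ − λ₂)·(λ₁ − λ₃)/(a²·(λ₁ − λ₂ᵖᵐˡ)·(λ₁ − λ₃ᵖᵐˡ)). In particular the reflected-mode coefficient α₃ vanishes: the layer is perfectly matched. 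-/
theorem eq_zero_of_add_eq_of_add_mul_eq {R : Type*} [CommRing R] [NoZeroDivisors R]
    {A B C x y : R} (hxy : x ≠ y) (h : A + B = C) (h' : A * x + B * y = C * x) : B = 0 := by
  have hB : B * (y - x) = 0 := by linear_combination h' - x * h
  exact (mul_eq_zero.1 hB).resolve_right (sub_ne_zero.2 hxy.symm)

theorem first_pml_perfectly_matched_general
    (lam₁ lam₂ lam₃ lam₂p lam₃p a α₁ α₂ α₃ β₁ β₂ : ℂ)
    (hd13 : lam₁ ≠ lam₃) (hd23 : lam₂ ≠ lam₃)
    (ha : a ≠ 0) (h2p : lam₂p ≠ lam₁) (h3p : lam₃p ≠ lam₁)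
    (h1 : α₁ * (lam₁ - lam₂) * (lam₁ - lam₃) =
      β₁ * a ^ 2 * (lam₁ - lam₂p) * (lam₁ - lam₃p))
    (h2 : α₂ * (lam₂ - lam₁) + α₃ * (lam₃ - lam₁) = β₂ * (lam₂p - lam₁))
    (h3 : α₂ * (lam₂ - lam₁) * lam₂ + α₃ * (lam₃ - lam₁) * lam₃ =
      β₂ * (lam₂p - lam₁) * lam₂) :
    α₃ = 0 ∧ β₂ = α₂ * (lam₂ - lam₁) / (lam₂p - lam₁) ∧
    β₁ = α₁ * (lam₁ - lam₂) * (lam₁ - lam₃) /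
      (a ^ 2 * (lam₁ - lam₂p) * (lam₁ - lam₃p)) := by
  have hα₃ : α₃ = 0 :=
    (mul_eq_zero.1 (eq_zero_of_add_eq_of_add_mul_eq hd23 h2 h3)).resolve_right
      (sub_ne_zero.2 hd13.symm)
  refine ⟨hα₃, eq_div_of_mul_eq (sub_ne_zero.2 h2p) ?_, eq_div_of_mul_eq ?_ ?_⟩
  · simpa [hα₃] using h2.symm
  · exact mul_ne_zero (mul_ne_zero (pow_ne_zero 2 ha) (sub_ne_zero.2 h2p.symm))
      (sub_ne_zero.2 h3p.symm)
  · linear_combination -h1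

/-- The interface system of the first PML model forces the reflected-mode coefficient
`α₃` to vanish (the layer is perfectly matched), and determines the transmitted
coefficients `β₁`, `β₂` explicitly. -/
theorem first_pml_perfectly_matched
    (lam₁ lam₂ lam₃ lam₂p lam₃p a α₁ α₂ α₃ β₁ β₂ : ℂ)
    (hd12 : lam₁ ≠ lam₂) (hd13 : lam₁ ≠ lam₃) (hd23 : lam₂ ≠ lam₃)
    (ha : a ≠ 0) (h2p : lam₂p ≠ lam₁) (h3p : lam₃p ≠ lam₁)
    (h1 : α₁ * (lam₁ - lam₂) * (lam₁ - lam₃) =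
      β₁ * a ^ 2 * (lam₁ - lam₂p) * (lam₁ - lam₃p))
    (h2 : α₂ * (lam₂ - lam₁) + α₃ * (lam₃ - lam₁) = β₂ * (lam₂p - lam₁))
    (h3 : α₂ * (lam₂ - lam₁) * lam₂ + α₃ * (lam₃ - lam₁) * lam₃ =
      β₂ * (lam₂p - lam₁) * lam₂) :
    α₃ = 0 ∧ β₂ = α₂ * (lam₂ - lam₁) / (lam₂p - lam₁) ∧
    β₁ = α₁ * (lam₁ - lam₂) * (lam₁ - lam₃) /
      (a ^ 2 * (lam₁ - lam₂p) * (lam₁ - lam₃p)) :=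
  first_pml_perfectly_matched_general lam₁ lam₂ lam₃ lam₂p lam₃p a α₁ α₂ α₃ β₁ β₂ hd13 hd23 ha h2p
    h3p h1 h2 h3
end

section
/- Assume ū² < c̄² and Ω ≠ 0. For λ ∈ ℂ define λᵖᵐˡ = (1 + (c̄² − ū²)·σ/(c̄·i·Ω))·(λ − m) + m. Then: (1) the PML derivative symbol P evaluated at λᵖᵐˡ equals λ (equivalently, ∂ₓᵖᵐˡ e^{λᵖᵐˡ x} = λ·e^{λᵖᵐˡ x}); and (2) if λ₂, λ₃ ∈ ℂ are the roots of L̂, i.e. L̂ = −(c̄² − ū²)·(X − λ₂)·(X − λ₃), then the PML advective wave symbol factors as L̂ᵖᵐˡ = −(c̄² − ū²)·a²·(X − λ₂ᵖᵐˡ)·(X − λ₃ᵖᵐˡ) in ℂ[X]. -/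
open Polynomial Matrix Complex

/-- The PML symbol factor `a = c̄·i·Ω/(c̄·i·Ω + (c̄² − ū²)·σ)`. -/
noncomputable def aSym (ub cb σ Ω : ℝ) : ℂ :=
  ((cb : ℂ) * Complex.I * (Ω : ℂ)) /
    ((cb : ℂ) * Complex.I * (Ω : ℂ) + ((cb : ℂ) ^ 2 - (ub : ℂ) ^ 2) * (σ : ℂ))

/-- The constant `m = ū·i·Ω/(c̄² − ū²)`. -/
noncomputable def mSym (ub cb Ω : ℝ) : ℂ :=
  (ub : ℂ) * Complex.I * (Ω : ℂ) / ((cb : ℂ) ^ 2 - (ub : ℂ) ^ 2)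

/-- The PML derivative symbol `P = a·(X − m) + m ∈ ℂ[X]`. -/
noncomputable def Ppml (ub cb σ Ω : ℝ) : Polynomial ℂ :=
  C (aSym ub cb σ Ω) * (X - C (mSym ub cb Ω)) + C (mSym ub cb Ω)

/-- The PML advective wave symbol `L̂ᵖᵐˡ = L̂ ∘ P ∈ ℂ[X]`. -/
noncomputable def Lpml (ub cb k σ Ω : ℝ) : Polynomial ℂ :=
  (Lhat ub cb k Ω).comp (Ppml ub cb σ Ω)

/-- The PML-transformed exponent `λᵖᵐˡ = (1 + (c̄² − ū²)σ/(c̄iΩ))·(λ − m) + m`. -/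
noncomputable def lamPml (ub cb σ Ω : ℝ) (lam : ℂ) : ℂ :=
  (1 + ((cb : ℂ) ^ 2 - (ub : ℂ) ^ 2) * (σ : ℂ) / ((cb : ℂ) * Complex.I * (Ω : ℂ))) *
    (lam - mSym ub cb Ω) + mSym ub cb Ω

/-- (1) The PML derivative symbol `P` evaluated at `λᵖᵐˡ` equals `λ`; and (2) if
`L̂ = −(c̄² − ū²)(X − λ₂)(X − λ₃)` then the PML advective wave symbol factors as
`L̂ᵖᵐˡ = −(c̄² − ū²)·a²·(X − λ₂ᵖᵐˡ)(X − λ₃ᵖᵐˡ)`. -/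
theorem pml_symbol_factorization (ub vb cb rb ω k σ : ℝ)
    (hc : 0 < cb) (hr : 0 < rb) (hσ : 0 ≤ σ)
    (hsub : ub ^ 2 < cb ^ 2) (hΩ : ω + k * vb ≠ 0) :
    (∀ lam : ℂ,
      (Ppml ub cb σ (ω + k * vb)).eval (lamPml ub cb σ (ω + k * vb) lam) = lam) ∧
    (∀ lam₂ lam₃ : ℂ,
      Lhat ub cb k (ω + k * vb) =
        C (-((cb : ℂ) ^ 2 - (ub : ℂ) ^ 2)) * (X - C lam₂) * (X - C lam₃) →
      Lpml ub cb k σ (ω + k * vb) =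
        C (-((cb : ℂ) ^ 2 - (ub : ℂ) ^ 2) * aSym ub cb σ (ω + k * vb) ^ 2) *
          (X - C (lamPml ub cb σ (ω + k * vb) lam₂)) *
          (X - C (lamPml ub cb σ (ω + k * vb) lam₃))) := by

  set Ω : ℝ := ω + k * vb with hΩdef
  have hΩ' : (Ω : ℂ) ≠ 0 := by exact_mod_cast hΩ
  have hN : (cb : ℂ) * Complex.I * (Ω : ℂ) ≠ 0 := by
    simp [Complex.I_ne_zero, hΩ', Complex.ofReal_ne_zero, hc.ne']
  have hD : (cb : ℂ) * Complex.I * (Ω : ℂ) + ((cb : ℂ) ^ 2 - (ub : ℂ) ^ 2) * (σ : ℂ) ≠ 0 := by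
    intro h
    have him := congrArg Complex.im h
    simp only [Complex.add_im, Complex.mul_im, Complex.mul_re, Complex.ofReal_re,
      Complex.ofReal_im, Complex.I_re, Complex.I_im, Complex.zero_im, mul_zero, mul_one,
      zero_mul, sub_zero, zero_sub, add_zero, zero_add, ← Complex.ofReal_pow, ← Complex.ofReal_sub] at him
    have him2 : cb * Ω = 0 := by simpa using him
    rcases mul_eq_zero.mp him2 with h1 | h1
    · exact hc.ne' h1
    · exact hΩ h1
  have hkey : aSym ub cb σ Ω *
      (1 + ((cb : ℂ) ^ 2 - (ub : ℂ) ^ 2) * (σ : ℂ) / ((cb : ℂ) * Complex.I * (Ω : ℂ))) = 1 := by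
    unfold aSym
    have hcb : (cb : ℂ) ≠ 0 := by exact_mod_cast hc.ne'
    field_simp
  have hfac : ∀ lam x : ℂ, (Ppml ub cb σ Ω).eval x - lam
      = aSym ub cb σ Ω * (x - lamPml ub cb σ Ω lam) := by
    intro lam x
    simp only [Ppml, lamPml, eval_add, eval_mul, eval_sub, eval_C, eval_X]
    linear_combination (lam - mSym ub cb Ω) * hkey
  constructor
  · intro lam
    have h := hfac lam (lamPml ub cb σ Ω lam)
    simp only [sub_self, mul_zero] at h
    exact sub_eq_zero.mp h
  · intro lam₂ lam₃ hL
    apply Polynomial.funext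
    intro x
    rw [show Lpml ub cb k σ Ω = (Lhat ub cb k Ω).comp (Ppml ub cb σ Ω) from rfl, eval_comp, hL]
    simp only [eval_mul, eval_sub, eval_C, eval_X]
    linear_combination (-((cb : ℂ) ^ 2 - (ub : ℂ) ^ 2)) *
      (((Ppml ub cb σ Ω).eval x - lam₃) * hfac lam₂ x +
        aSym ub cb σ Ω * (x - lamPml ub cb σ Ω lam₂) * hfac lam₃ x)
end

section
/- Assume ū ≠ 0, ū² < c̄², Ω ≠ 0, σ > 0, and the propagating condition k²·(c̄² − ū²) < Ω²; set κ = k²·(c̄² − ū²)/Ω², λ₁ = −i·Ω/ū, λ₂ = i·Ω·(ū − c̄·√(1 − κ))/(c̄² − ū²), λ₃ = i·Ω·(ū + c̄·√(1 − κ))/(c̄² − ū²), and λⱼᵖᵐˡ = (1 + (c̄² − ū²)·σ/(c̄·i·Ω))·(λⱼ − m) + m for j = 2, 3. Then Re(λ₂ᵖᵐˡ) = −σ·√(1 − κ) < 0 and Re(λ₃ᵖᵐˡ) = σ·√(1 − κ) > 0, while λ₁, λ₂, λ₃ are purely imaginary. In particular, inside the PML the right-going acoustic mode e^{λ₂ᵖᵐˡ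 x} decays exponentially as x → +∞, whereas the physical modes e^{λ₂x}, e^{λ₃x} and the transport mode e^{λ₁x} are undamped. -/
open Complex

lemma key_identity (c d O x σ : ℂ) (hd : d ≠ 0) (hc : c ≠ 0) (hO : O ≠ 0) :
    (1 + d * σ / (c * Complex.I * O)) * (Complex.I * O * (c * x) / d)
      = Complex.I * O * (c * x) / d + σ * x := by
  have hI : Complex.I ≠ 0 := Complex.I_ne_zero
  field_simp

lemma lamPml_shift (ub cb σ Ω : ℝ) (x lam : ℂ)
    (hd : ((cb:ℂ)^2 - (ub:ℂ)^2) ≠ 0) (hc : (cb:ℂ) ≠ 0) (hO : (Ω:ℂ) ≠ 0)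
    (hlm : lam - mSym ub cb Ω
      = Complex.I * (Ω:ℂ) * ((cb:ℂ) * x) / ((cb:ℂ)^2 - (ub:ℂ)^2)) :
    lamPml ub cb σ Ω lam = lam + (σ:ℂ) * x := by
  simp only [lamPml]
  rw [hlm, key_identity _ _ _ _ _ hd hc hO, ← hlm]
  ring

/-- In the propagating regime, the PML exponents satisfy `Re λ₂ᵖᵐˡ = −σ√(1−κ) < 0` and
`Re λ₃ᵖᵐˡ = σ√(1−κ) > 0`, while `λ₁, λ₂, λ₃` are purely imaginary: inside the PML the
right-going acoustic mode decays exponentially, whereas the physical modes are undamped. -/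
theorem pml_exponents_real_parts (ub vb cb rb ω k σ : ℝ)
    (hu : ub ≠ 0) (hc : 0 < cb) (hr : 0 < rb)
    (hsub : ub ^ 2 < cb ^ 2) (hΩ : ω + k * vb ≠ 0) (hσ : 0 < σ)
    (hprop : k ^ 2 * (cb ^ 2 - ub ^ 2) < (ω + k * vb) ^ 2) :
    let Ω : ℝ := ω + k * vb
    let κ : ℝ := k ^ 2 * (cb ^ 2 - ub ^ 2) / Ω ^ 2
    let lam₁ : ℂ := -(Complex.I * (Ω : ℂ)) / (ub : ℂ)
    let lam₂ : ℂ := Complex.I * (Ω : ℂ) * ((ub : ℂ) - (cb : ℂ) * (Real.sqrt (1 - κ) : ℂ)) /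
      ((cb : ℂ) ^ 2 - (ub : ℂ) ^ 2)
    let lam₃ : ℂ := Complex.I * (Ω : ℂ) * ((ub : ℂ) + (cb : ℂ) * (Real.sqrt (1 - κ) : ℂ)) /
      ((cb : ℂ) ^ 2 - (ub : ℂ) ^ 2)
    (lamPml ub cb σ Ω lam₂).re = -σ * Real.sqrt (1 - κ) ∧
    -σ * Real.sqrt (1 - κ) < 0 ∧
    (lamPml ub cb σ Ω lam₃).re = σ * Real.sqrt (1 - κ) ∧
    0 < σ * Real.sqrt (1 - κ) ∧
    lam₁.re = 0 ∧ lam₂.re = 0 ∧ lam₃.re = 0 := by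
  intro Ω κ lam₁ lam₂ lam₃
  have hd : (0:ℝ) < cb ^ 2 - ub ^ 2 := by linarith
  have hΩ2 : (0:ℝ) < Ω ^ 2 := by positivity
  have hκ : κ < 1 := by rw [div_lt_one hΩ2]; exact hprop
  have hs : 0 < Real.sqrt (1 - κ) := Real.sqrt_pos.mpr (by linarith)
  set s : ℝ := Real.sqrt (1 - κ) with hsdef
  have hdC : ((cb:ℂ) ^ 2 - (ub:ℂ) ^ 2) ≠ 0 := by
    have : ((cb ^ 2 - ub ^ 2 : ℝ) : ℂ) ≠ 0 := by exact_mod_cast hd.ne'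
    push_cast at this; exact this
  have hcC : (cb:ℂ) ≠ 0 := by exact_mod_cast hc.ne'
  have hΩC : (Ω:ℂ) ≠ 0 := by exact_mod_cast hΩ
  have hre : ∀ x : ℝ, (Complex.I * (Ω : ℂ) * ((x:ℝ) : ℂ) / ((cb : ℂ) ^ 2 - (ub : ℂ) ^ 2)).re = 0 := by
    intro x
    have h : Complex.I * (Ω : ℂ) * ((x:ℝ) : ℂ) / ((cb : ℂ) ^ 2 - (ub : ℂ) ^ 2)
        = ((Ω * x / (cb ^ 2 - ub ^ 2) : ℝ) : ℂ) * Complex.I := by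
      push_cast; field_simp
    rw [h, Complex.mul_I_re, Complex.ofReal_im]; exact neg_zero
  have h2re : lam₂.re = 0 := by
    have h : lam₂ = Complex.I * (Ω:ℂ) * (((ub - cb * s : ℝ)):ℂ) / ((cb:ℂ)^2 - (ub:ℂ)^2) := by
      simp only [lam₂]; push_cast; ring
    rw [h]; exact hre _
  have h3re : lam₃.re = 0 := by
    have h : lam₃ = Complex.I * (Ω:ℂ) * (((ub + cb * s : ℝ)):ℂ) / ((cb:ℂ)^2 - (ub:ℂ)^2) := by
      simp only [lam₃]; push_cast; ring
    rw [h]; exact hre _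
  have h1re : lam₁.re = 0 := by
    have h : lam₁ = (((-Ω / ub : ℝ)) : ℂ) * Complex.I := by
      simp only [lam₁]; push_cast; ring
    rw [h, Complex.mul_I_re, Complex.ofReal_im]; exact neg_zero
  have hm2 : lam₂ - mSym ub cb Ω
      = Complex.I * (Ω:ℂ) * ((cb:ℂ) * (((-s : ℝ)):ℂ)) / ((cb:ℂ)^2 - (ub:ℂ)^2) := by
    simp only [lam₂, mSym]; push_cast; field_simp; ring
  have hm3 : lam₃ - mSym ub cb Ω
      = Complex.I * (Ω:ℂ) * ((cb:ℂ) * ((s : ℝ):ℂ)) / ((cb:ℂ)^2 - (ub:ℂ)^2) := by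
    simp only [lam₃, mSym]; push_cast; field_simp; ring
  have h2 := lamPml_shift ub cb σ Ω (((-s : ℝ)):ℂ) lam₂ hdC hcC hΩC hm2
  have h3 := lamPml_shift ub cb σ Ω (((s : ℝ)):ℂ) lam₃ hdC hcC hΩC hm3
  refine ⟨?_, by nlinarith, ?_, by positivity, h1re, h2re, h3re⟩
  · rw [h2]
    have : ((σ:ℂ) * (((-s:ℝ)):ℂ)) = (((-(σ*s) : ℝ)):ℂ) := by push_cast; ring
    rw [this, Complex.add_re, Complex.ofReal_re, h2re]; ring
  · rw [h3]
    have : ((σ:ℂ) * (((s:ℝ)):ℂ)) = ((((σ*s) : ℝ)):ℂ) := by push_cast; ring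
    rw [this, Complex.add_re, Complex.ofReal_re, h3re]; ring
end

section
/- Define the 3 × 3 matrix over ℂ[X]: El = [[Ĝ, −ρ̄·c̄²·X, −i·ρ̄·c̄²·k], [0, 1, 0], [0, 0, 1]]. Then the matrix product El · Â equals [[L̂, 0, 0], [X/ρ̄, Ĝ, 0], [i·k/ρ̄, 0, Ĝ]]. In particular, the Fourier-transformed pressure of any solution of the homogeneous linearized Euler system satisfies the advective wave equation L̂(p̂) = 0. -/
open Polynomial Matrix Complex

/-- The matrix `El = [[Ĝ, −ρ̄c̄²X, −iρ̄c̄²k], [0, 1, 0], [0, 0, 1]]`. -/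
noncomputable def Elmat (ub cb rb k Ω : ℝ) : Matrix (Fin 3) (Fin 3) (Polynomial ℂ) :=
  !![Ghat ub Ω, -(C ((rb : ℂ) * (cb : ℂ) ^ 2) * X), -C (Complex.I * (rb : ℂ) * (cb : ℂ) ^ 2 * (k : ℂ));
     0, 1, 0;
     0, 0, 1]

/-- `El · Â = [[L̂, 0, 0], [X/ρ̄, Ĝ, 0], [ik/ρ̄, 0, Ĝ]]`; in particular the Fourier-transformed
pressure of any (smooth) solution of the homogeneous linearized Euler system satisfies the
advective wave equation `L̂(p̂) = 0`. -/
theorem El_mul_euler_and_pressure_wave (ub vb cb rb ω k : ℝ)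
    (hc : 0 < cb) (hr : 0 < rb) :
    (Elmat ub cb rb k (ω + k * vb) * eulerHat ub cb rb k (ω + k * vb) =
      !![Lhat ub cb k (ω + k * vb), 0, 0;
         C ((rb : ℂ)⁻¹) * X, Ghat ub (ω + k * vb), 0;
         C (Complex.I * (k : ℂ) / (rb : ℂ)), 0, Ghat ub (ω + k * vb)]) ∧
    (∀ p u v : ℝ → ℂ, ContDiff ℝ (⊤ : ℕ∞) p → ContDiff ℝ (⊤ : ℕ∞) u → ContDiff ℝ (⊤ : ℕ∞) v →
      (∀ x : ℝ, Complex.I * (ω : ℂ) * p x + (ub : ℂ) * deriv p x +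
        Complex.I * (k : ℂ) * (vb : ℂ) * p x + (rb : ℂ) * (cb : ℂ) ^ 2 * deriv u x +
        Complex.I * (rb : ℂ) * (cb : ℂ) ^ 2 * (k : ℂ) * v x = 0) →
      (∀ x : ℝ, (rb : ℂ)⁻¹ * deriv p x + Complex.I * (ω : ℂ) * u x +
        (ub : ℂ) * deriv u x + Complex.I * (k : ℂ) * (vb : ℂ) * u x = 0) →
      (∀ x : ℝ, Complex.I * (k : ℂ) / (rb : ℂ) * p x + Complex.I * (ω : ℂ) * v x +
        (ub : ℂ) * deriv v x + Complex.I * (k : ℂ) * (vb : ℂ) * v x = 0) →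
      ∀ x : ℝ, (Lhat ub cb k (ω + k * vb)).coeff 0 * p x +
        (Lhat ub cb k (ω + k * vb)).coeff 1 * deriv p x +
        (Lhat ub cb k (ω + k * vb)).coeff 2 * iteratedDeriv 2 p x = 0) := by
  constructor
  · have hrb : (rb : ℂ) ≠ 0 := by exact_mod_cast hr.ne'
    have h1 : (C ((rb:ℂ) * (cb:ℂ)^2) * C ((rb:ℂ)⁻¹) : Polynomial ℂ) = C ((cb:ℂ)^2) := by
      rw [← _root_.map_mul]; congr 1; field_simp
    have h2 : (C (Complex.I * (rb:ℂ) * (cb:ℂ)^2 * (k:ℂ)) * C (Complex.I * (k:ℂ) / (rb:ℂ)) : Polynomial ℂ)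
        = -C ((cb:ℂ)^2 * (k:ℂ)^2) := by
      rw [← _root_.map_mul, ← map_neg]; congr 1
      field_simp
      linear_combination (cb:ℂ)^2*(k:ℂ)^2 * Complex.I_sq
    have hC1 : (C (rb:ℂ) * C ((rb:ℂ)⁻¹) : Polynomial ℂ) = 1 := by
      rw [← _root_.map_mul, mul_inv_cancel₀ hrb, Polynomial.C_1]
    have hCI : (C Complex.I * C Complex.I : Polynomial ℂ) = -1 := by
      rw [← _root_.map_mul, Complex.I_mul_I, map_neg, Polynomial.C_1]
    refine Matrix.ext fun i j => ?_
    fin_cases i <;> fin_cases j <;>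
      simp [Elmat, eulerHat, Matrix.mul_apply, Fin.sum_univ_three, Lhat, _root_.map_mul,
        div_eq_mul_inv, map_inv₀] <;>
      try ring
    · linear_combination (C ((cb:ℂ))^2 * (-X^2 - C Complex.I^2 * C (k:ℂ)^2)) * hC1 -
        C ((cb:ℂ))^2 * C ((k:ℂ))^2 * hCI
  · intro p u v hp hu hv hA hB hC x
    have hrb : (rb : ℂ) ≠ 0 := by exact_mod_cast hr.ne'
    set Ω : ℂ := (ω:ℂ) + (k:ℂ) * (vb:ℂ) with hΩ
    -- coefficients of Lhat
    have hL : Lhat ub cb k (ω + k * vb) = C ((Complex.I * Ω)^2 + (cb:ℂ)^2 * (k:ℂ)^2) +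
        C (2 * (ub:ℂ) * (Complex.I * Ω)) * X + C ((ub:ℂ)^2 - (cb:ℂ)^2) * X^2 := by
      simp only [Lhat, Ghat, map_add, _root_.map_mul, map_pow, map_sub, map_ofNat,
        Complex.ofReal_add, Complex.ofReal_mul, hΩ]
      ring
    rw [hL]
    simp only [coeff_add, coeff_C, coeff_C_mul, coeff_X, coeff_X_pow, mul_one, mul_zero]
    norm_num
    -- differentiability facts
    have hp1 : Differentiable ℝ p := hp.differentiable (by simp)
    have hp2 : Differentiable ℝ (deriv p) := (((hp.of_le (by simp) : ContDiff ℝ ((⊤:ℕ∞):WithTop ℕ∞) p).iterate_deriv 1).differentiable (by simp) : Differentiable ℝ (deriv^[1] p))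
    have hu1 : Differentiable ℝ u := hu.differentiable (by simp)
    have hu2 : Differentiable ℝ (deriv u) := (((hu.of_le (by simp) : ContDiff ℝ ((⊤:ℕ∞):WithTop ℕ∞) u).iterate_deriv 1).differentiable (by simp) : Differentiable ℝ (deriv^[1] u))
    have hv1 : Differentiable ℝ v := hv.differentiable (by simp)
    have hit : iteratedDeriv 2 p x = deriv (deriv p) x := by
      rw [iteratedDeriv_succ, iteratedDeriv_one]
    -- derivative of equation A
    have hA' : Complex.I * (ω : ℂ) * deriv p x + (ub : ℂ) * deriv (deriv p) x +
        Complex.I * (k : ℂ) * (vb : ℂ) * deriv p x + (rb : ℂ) * (cb : ℂ) ^ 2 * deriv (deriv u) x +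
        Complex.I * (rb : ℂ) * (cb : ℂ) ^ 2 * (k : ℂ) * deriv v x = 0 := by
      have hd : HasDerivAt (fun x => Complex.I * (ω : ℂ) * p x + (ub : ℂ) * deriv p x +
          Complex.I * (k : ℂ) * (vb : ℂ) * p x + (rb : ℂ) * (cb : ℂ) ^ 2 * deriv u x +
          Complex.I * (rb : ℂ) * (cb : ℂ) ^ 2 * (k : ℂ) * v x)
          (Complex.I * (ω : ℂ) * deriv p x + (ub : ℂ) * deriv (deriv p) x +
          Complex.I * (k : ℂ) * (vb : ℂ) * deriv p x + (rb : ℂ) * (cb : ℂ) ^ 2 * deriv (deriv u) x +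
          Complex.I * (rb : ℂ) * (cb : ℂ) ^ 2 * (k : ℂ) * deriv v x) x :=
        (((((hp1 x).hasDerivAt.const_mul _).add ((hp2 x).hasDerivAt.const_mul _)).add
          ((hp1 x).hasDerivAt.const_mul _)).add ((hu2 x).hasDerivAt.const_mul _)).add
          ((hv1 x).hasDerivAt.const_mul _)
      have h0 : HasDerivAt (fun _ : ℝ => (0:ℂ)) _ x :=
        hd.congr_of_eventuallyEq (Filter.Eventually.of_forall fun y => (hA y).symm)
      simpa using h0.unique (hasDerivAt_const x 0)
    -- derivative of equation B
    have hB' : (rb : ℂ)⁻¹ * deriv (deriv p) x + Complex.I * (ω : ℂ) * deriv u x +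
        (ub : ℂ) * deriv (deriv u) x + Complex.I * (k : ℂ) * (vb : ℂ) * deriv u x = 0 := by
      have hd : HasDerivAt (fun x => (rb : ℂ)⁻¹ * deriv p x + Complex.I * (ω : ℂ) * u x +
          (ub : ℂ) * deriv u x + Complex.I * (k : ℂ) * (vb : ℂ) * u x)
          ((rb : ℂ)⁻¹ * deriv (deriv p) x + Complex.I * (ω : ℂ) * deriv u x +
          (ub : ℂ) * deriv (deriv u) x + Complex.I * (k : ℂ) * (vb : ℂ) * deriv u x) x :=
        ((((hp2 x).hasDerivAt.const_mul _).add ((hu1 x).hasDerivAt.const_mul _)).add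
          ((hu2 x).hasDerivAt.const_mul _)).add ((hu1 x).hasDerivAt.const_mul _)
      have h0 : HasDerivAt (fun _ : ℝ => (0:ℂ)) _ x :=
        hd.congr_of_eventuallyEq (Filter.Eventually.of_forall fun y => (hB y).symm)
      simpa using h0.unique (hasDerivAt_const x 0)
    rw [hit]
    have hAx := hA x
    have hCx := hC x
    rw [div_eq_mul_inv] at hCx
    have hIk : Complex.I * Complex.I = -1 := Complex.I_mul_I
    have hB2 : deriv (deriv p) x + (rb:ℂ) * (Complex.I * (ω:ℂ) * deriv u x +
        (ub:ℂ) * deriv (deriv u) x + Complex.I * (k:ℂ) * (vb:ℂ) * deriv u x) = 0 := by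
      have h := congrArg (fun z => (rb:ℂ) * z) hB'
      simp only [mul_zero] at h
      calc deriv (deriv p) x + (rb:ℂ) * (Complex.I * (ω:ℂ) * deriv u x +
          (ub:ℂ) * deriv (deriv u) x + Complex.I * (k:ℂ) * (vb:ℂ) * deriv u x)
          = (rb:ℂ) * ((rb:ℂ)⁻¹ * deriv (deriv p) x + Complex.I * (ω:ℂ) * deriv u x +
              (ub:ℂ) * deriv (deriv u) x + Complex.I * (k:ℂ) * (vb:ℂ) * deriv u x) := by
            field_simp; ring
        _ = 0 := h
    have hC2 : Complex.I * (k:ℂ) * p x + (rb:ℂ) * (Complex.I * (ω:ℂ) * v x +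
        (ub:ℂ) * deriv v x + Complex.I * (k:ℂ) * (vb:ℂ) * v x) = 0 := by
      have h := congrArg (fun z => (rb:ℂ) * z) hCx
      simp only [mul_zero] at h
      calc Complex.I * (k:ℂ) * p x + (rb:ℂ) * (Complex.I * (ω:ℂ) * v x +
          (ub:ℂ) * deriv v x + Complex.I * (k:ℂ) * (vb:ℂ) * v x)
          = (rb:ℂ) * (Complex.I * (k:ℂ) * (rb:ℂ)⁻¹ * p x + Complex.I * (ω:ℂ) * v x +
              (ub:ℂ) * deriv v x + Complex.I * (k:ℂ) * (vb:ℂ) * v x) := by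
            field_simp; ring
        _ = 0 := h
    linear_combination (Complex.I * Ω) * hAx + (ub:ℂ) * hA' - (cb:ℂ)^2 * hB2 -
      Complex.I*(cb:ℂ)^2*(k:ℂ) * hC2 +
      ((cb:ℂ)^2*(k:ℂ)^2 * p x) * hIk
end

section
/- Let Âₑₓₜ be the Fourier transform of the extended second PML model, i.e. the 4 × 4 matrix over ℂ[X]: Âₑₓₜ = [[Ĝ, −1, 0, 0], [L̂ᵖᵐˡ − L̂, Ĝ, ρ̄·c̄²·X, i·ρ̄·c̄²·k], [0, X/ρ̄, Ĝ, 0], [0, i·k/ρ̄, 0, Ĝ]]. Then the row vector (−(L̂ᵖᵐˡ − L̂), Ĝ, −ρ̄·c̄²·X, −i·ρ̄·c̄²·k) multiplied on the left of Âₑₓₜ equals the row vector (0, L̂ᵖᵐˡ, 0, 0). In particular, the pressure component of any solution of the homogeneous extended PML system satisfies the PML advective wave equation L̂ᵖᵐˡ(p̂) = 0. -/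
open Polynomial Matrix Complex

/-- The Fourier transform `Âₑₓₜ` of the extended second PML model, a `4 × 4` matrix
over `ℂ[X]`. -/
noncomputable def pml2Ext (ub cb rb k σ Ω : ℝ) : Matrix (Fin 4) (Fin 4) (Polynomial ℂ) :=
  !![Ghat ub Ω, -1, 0, 0;
     Lpml ub cb k σ Ω - Lhat ub cb k Ω, Ghat ub Ω,
       C ((rb : ℂ) * (cb : ℂ) ^ 2) * X, C (Complex.I * (rb : ℂ) * (cb : ℂ) ^ 2 * (k : ℂ));
     0, C ((rb : ℂ)⁻¹) * X, Ghat ub Ω, 0;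
     0, C (Complex.I * (k : ℂ) / (rb : ℂ)), 0, Ghat ub Ω]

/-- Application of a polynomial symbol of degree at most `2` as a differential operator
in `x`. -/
noncomputable def app2 (q : Polynomial ℂ) (f : ℝ → ℂ) (x : ℝ) : ℂ :=
  q.coeff 0 * f x + q.coeff 1 * deriv f x + q.coeff 2 * iteratedDeriv 2 f x

lemma Lhat_eq (ub cb k Ω : ℝ) : Lhat ub cb k Ω =
    C ((ub:ℂ)^2 - (cb:ℂ)^2) * X^2 + C (2*(ub:ℂ)*(Complex.I*(Ω:ℂ))) * X
      + C ((Complex.I*(Ω:ℂ))^2 + (cb:ℂ)^2*(k:ℂ)^2) := by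
  simp only [Lhat, Ghat, C_add, C_mul, C_sub, C_pow, map_ofNat]
  ring

lemma Lhat_coeff0 (ub cb k Ω : ℝ) :
    (Lhat ub cb k Ω).coeff 0 = (Complex.I*(Ω:ℂ))^2 + (cb:ℂ)^2*(k:ℂ)^2 := by
  rw [Lhat_eq]; simp only [coeff_add, coeff_C_mul, coeff_X_pow, coeff_X, coeff_C]; norm_num
lemma Lhat_coeff1 (ub cb k Ω : ℝ) :
    (Lhat ub cb k Ω).coeff 1 = 2*(ub:ℂ)*(Complex.I*(Ω:ℂ)) := by
  rw [Lhat_eq]; simp only [coeff_add, coeff_C_mul, coeff_X_pow, coeff_X, coeff_C]; norm_num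
lemma Lhat_coeff2 (ub cb k Ω : ℝ) :
    (Lhat ub cb k Ω).coeff 2 = (ub:ℂ)^2 - (cb:ℂ)^2 := by
  rw [Lhat_eq]; simp only [coeff_add, coeff_C_mul, coeff_X_pow, coeff_X, coeff_C]; norm_num

lemma smooth_deriv {f : ℝ → ℂ} (hf : ContDiff ℝ (⊤:ℕ∞) f) : ContDiff ℝ (⊤:ℕ∞) (deriv f) :=
  (contDiff_infty_iff_deriv.mp hf).2

lemma hda {f : ℝ → ℂ} (hf : ContDiff ℝ (⊤:ℕ∞) f) (y : ℝ) : HasDerivAt f (deriv f y) y :=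
  ((hf.differentiable (by simp)) y).hasDerivAt

lemma it2 (f : ℝ → ℂ) : iteratedDeriv 2 f = deriv (deriv f) := by
  simp [iteratedDeriv_succ, iteratedDeriv_zero]


private lemma aux_pde (ub cb rb ω k vb σ : ℝ) (hc : 0 < cb) (hr : 0 < rb)
    (P p u v : ℝ → ℂ)
    (hP : ContDiff ℝ (⊤ : ℕ∞) P) (hp : ContDiff ℝ (⊤ : ℕ∞) p) (hu : ContDiff ℝ (⊤ : ℕ∞) u) (hv : ContDiff ℝ (⊤ : ℕ∞) v)
    (e1 : ∀ x : ℝ, (ub : ℂ) * deriv P x + Complex.I * ((ω + k * vb : ℝ) : ℂ) * P x - p x = 0)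
    (e2 : ∀ x : ℝ, app2 (Lpml ub cb k σ (ω + k * vb) - Lhat ub cb k (ω + k * vb)) P x +
        (ub : ℂ) * deriv p x + Complex.I * ((ω + k * vb : ℝ) : ℂ) * p x +
        (rb : ℂ) * (cb : ℂ) ^ 2 * deriv u x +
        Complex.I * (rb : ℂ) * (cb : ℂ) ^ 2 * (k : ℂ) * v x = 0)
    (e3 : ∀ x : ℝ, (rb : ℂ)⁻¹ * deriv p x + (ub : ℂ) * deriv u x +
        Complex.I * ((ω + k * vb : ℝ) : ℂ) * u x = 0)
    (e4 : ∀ x : ℝ, Complex.I * (k : ℂ) / (rb : ℂ) * p x + (ub : ℂ) * deriv v x +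
        Complex.I * ((ω + k * vb : ℝ) : ℂ) * v x = 0) :
    ∀ x : ℝ, app2 (Lpml ub cb k σ (ω + k * vb)) p x = 0 := by
  intro x
  have hρ : (rb:ℂ) ≠ 0 := by exact_mod_cast hr.ne'
  have hP8 : ContDiff ℝ (⊤:ℕ∞) P := hP.of_le (by simp)
  have hp8 : ContDiff ℝ (⊤:ℕ∞) p := hp.of_le (by simp)
  have hu8 : ContDiff ℝ (⊤:ℕ∞) u := hu.of_le (by simp)
  have hv8 : ContDiff ℝ (⊤:ℕ∞) v := hv.of_le (by simp)
  set IΩ : ℂ := Complex.I * ((ω + k * vb : ℝ) : ℂ) with hIΩ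
  set d0 : ℂ := (Lpml ub cb k σ (ω + k * vb) - Lhat ub cb k (ω + k * vb)).coeff 0 with hd0
  set d1 : ℂ := (Lpml ub cb k σ (ω + k * vb) - Lhat ub cb k (ω + k * vb)).coeff 1 with hd1
  set d2 : ℂ := (Lpml ub cb k σ (ω + k * vb) - Lhat ub cb k (ω + k * vb)).coeff 2 with hd2
  -- p in terms of P
  have ep : ∀ y, p y = (ub:ℂ) * deriv P y + IΩ * P y := by
    intro y; linear_combination - e1 y
  have ep' : ∀ y, deriv p y = (ub:ℂ) * deriv (deriv P) y + IΩ * deriv P y := by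
    intro y
    have hfun : p = fun y => (ub:ℂ) * deriv P y + IΩ * P y := funext ep
    rw [hfun]
    exact (((hda (smooth_deriv hP8) y).const_mul (ub:ℂ)).add ((hda hP8 y).const_mul IΩ)).deriv
  have ep'' : ∀ y, deriv (deriv p) y =
      (ub:ℂ) * deriv (deriv (deriv P)) y + IΩ * deriv (deriv P) y := by
    intro y
    have hfun : deriv p = fun y => (ub:ℂ) * deriv (deriv P) y + IΩ * deriv P y := funext ep'
    rw [hfun]
    exact (((hda (smooth_deriv (smooth_deriv hP8)) y).const_mul (ub:ℂ)).add
      ((hda (smooth_deriv hP8) y).const_mul IΩ)).deriv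
  -- derivative of e3
  have e3' : ∀ y, (rb : ℂ)⁻¹ * deriv (deriv p) y + (ub : ℂ) * deriv (deriv u) y +
      IΩ * deriv u y = 0 := by
    intro y
    have hfun : (fun y => (rb : ℂ)⁻¹ * deriv p y + (ub : ℂ) * deriv u y + IΩ * u y)
        = fun _ => (0:ℂ) := funext e3
    have hD : HasDerivAt (fun y => (rb : ℂ)⁻¹ * deriv p y + (ub : ℂ) * deriv u y + IΩ * u y)
        ((rb : ℂ)⁻¹ * deriv (deriv p) y + (ub : ℂ) * deriv (deriv u) y + IΩ * deriv u y) y :=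
      (((hda (smooth_deriv hp8) y).const_mul ((rb:ℂ)⁻¹)).add
        ((hda (smooth_deriv hu8) y).const_mul (ub:ℂ))).add ((hda hu8 y).const_mul IΩ)
    rw [hfun] at hD
    simpa using hD.unique (hasDerivAt_const y 0)
  have e2c : ∀ y, d0 * P y + d1 * deriv P y + d2 * deriv (deriv P) y +
      (ub:ℂ) * deriv p y + IΩ * p y + (rb : ℂ) * (cb : ℂ) ^ 2 * deriv u y +
      Complex.I * (rb : ℂ) * (cb : ℂ) ^ 2 * (k : ℂ) * v y = 0 := by
    intro y
    have := e2 y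
    simp only [app2, it2] at this
    linear_combination this
  -- derivative of e2
  have e2' : ∀ y, d0 * deriv P y + d1 * deriv (deriv P) y + d2 * deriv (deriv (deriv P)) y +
      (ub:ℂ) * deriv (deriv p) y + IΩ * deriv p y + (rb : ℂ) * (cb : ℂ) ^ 2 * deriv (deriv u) y +
      Complex.I * (rb : ℂ) * (cb : ℂ) ^ 2 * (k : ℂ) * deriv v y = 0 := by
    intro y
    have hfun : (fun y => d0 * P y + d1 * deriv P y + d2 * deriv (deriv P) y +
        (ub:ℂ) * deriv p y + IΩ * p y + (rb : ℂ) * (cb : ℂ) ^ 2 * deriv u y +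
        Complex.I * (rb : ℂ) * (cb : ℂ) ^ 2 * (k : ℂ) * v y) = fun _ => (0:ℂ) := funext e2c
    have hD : HasDerivAt (fun y => d0 * P y + d1 * deriv P y + d2 * deriv (deriv P) y +
        (ub:ℂ) * deriv p y + IΩ * p y + (rb : ℂ) * (cb : ℂ) ^ 2 * deriv u y +
        Complex.I * (rb : ℂ) * (cb : ℂ) ^ 2 * (k : ℂ) * v y)
        (d0 * deriv P y + d1 * deriv (deriv P) y + d2 * deriv (deriv (deriv P)) y +
        (ub:ℂ) * deriv (deriv p) y + IΩ * deriv p y + (rb : ℂ) * (cb : ℂ) ^ 2 * deriv (deriv u) y +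
        Complex.I * (rb : ℂ) * (cb : ℂ) ^ 2 * (k : ℂ) * deriv v y) y :=
      ((((((hda hP8 y).const_mul d0).add ((hda (smooth_deriv hP8) y).const_mul d1)).add
        ((hda (smooth_deriv (smooth_deriv hP8)) y).const_mul d2)).add
        ((hda (smooth_deriv hp8) y).const_mul (ub:ℂ))).add
        ((hda hp8 y).const_mul IΩ)).add
        ((hda (smooth_deriv hu8) y).const_mul ((rb:ℂ) * (cb:ℂ)^2)) |>.add
        ((hda hv8 y).const_mul (Complex.I * (rb : ℂ) * (cb : ℂ) ^ 2 * (k : ℂ)))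
    rw [hfun] at hD
    simpa using hD.unique (hasDerivAt_const y 0)
  -- goal
  have hcoeff : ∀ n, (Lpml ub cb k σ (ω + k * vb)).coeff n =
      (Lpml ub cb k σ (ω + k * vb) - Lhat ub cb k (ω + k * vb)).coeff n
        + (Lhat ub cb k (ω + k * vb)).coeff n := by
    intro n; rw [coeff_sub]; ring
  simp only [app2, it2, hcoeff, Lhat_coeff0, Lhat_coeff1, Lhat_coeff2, ← hd0, ← hd1, ← hd2, ← hIΩ]
  have hinv : (rb:ℂ) * (rb:ℂ)⁻¹ = 1 := mul_inv_cancel₀ hρ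
  linear_combination (ub:ℂ) * e2' x + IΩ * e2c x + d0 * ep x + d1 * ep' x + d2 * ep'' x -
    (rb:ℂ)*(cb:ℂ)^2 * e3' x - Complex.I*(rb:ℂ)*(cb:ℂ)^2*(k:ℂ) * e4 x +
    ((cb:ℂ)^2 * deriv (deriv p) x) * hinv + (Complex.I^2*(cb:ℂ)^2*(k:ℂ)^2* p x) * hinv +
    ((cb:ℂ)^2*(k:ℂ)^2* p x) * Complex.I_sq


private lemma aux_matrix (ub cb rb k σ Ω : ℝ) (hr : 0 < rb) :
    (!![-(Lpml ub cb k σ Ω - Lhat ub cb k Ω),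
        Ghat ub Ω,
        -(C ((rb : ℂ) * (cb : ℂ) ^ 2) * X),
        -C (Complex.I * (rb : ℂ) * (cb : ℂ) ^ 2 * (k : ℂ))] *
      pml2Ext ub cb rb k σ Ω =
      !![0, Lpml ub cb k σ Ω, 0, 0]) := by
  have hρ : (rb:ℂ) ≠ 0 := by exact_mod_cast hr.ne'
  have hA' : C (rb:ℂ) * C ((rb:ℂ)⁻¹) = (1 : Polynomial ℂ) := by
    rw [← C_mul, mul_inv_cancel₀ hρ, C_1]
  have hB2 : C Complex.I * C (Complex.I*(k:ℂ)/(rb:ℂ)) * C (rb:ℂ) = -(C (k:ℂ)) := by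
    rw [← C_mul, ← C_mul, ← C_neg]; congr 1; field_simp
    linear_combination (k:ℂ)*Complex.I_sq
  have hLh : Lhat ub cb k Ω = Ghat ub Ω^2 + C (cb:ℂ)^2 * (C (k:ℂ)^2 - X^2) := by
    simp only [Lhat, C_pow]
  refine Matrix.ext fun i j => ?_
  fin_cases i
  fin_cases j <;>
    simp [pml2Ext, Matrix.mul_apply, Fin.sum_univ_four, Matrix.vecHead, Matrix.vecTail]
  · ring
  · linear_combination (-1 : Polynomial ℂ) * hLh - C (cb:ℂ)^2 * X^2 * hA' - C (cb:ℂ)^2 * C (k:ℂ) * hB2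
  · ring
  · ring


/-- The row vector `(−(L̂ᵖᵐˡ − L̂), Ĝ, −ρ̄c̄²X, −iρ̄c̄²k)` multiplied on the left of `Âₑₓₜ`
equals `(0, L̂ᵖᵐˡ, 0, 0)`; in particular the pressure component of any smooth solution of the
homogeneous extended PML system satisfies the PML advective wave equation `L̂ᵖᵐˡ(p̂) = 0`. -/
theorem pml2_pressure_equation (ub vb cb rb ω k σ : ℝ)
    (hc : 0 < cb) (hr : 0 < rb) (hσ : 0 ≤ σ)
    (hsub : ub ^ 2 < cb ^ 2) (hΩ : ω + k * vb ≠ 0) :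
    (!![-(Lpml ub cb k σ (ω + k * vb) - Lhat ub cb k (ω + k * vb)),
        Ghat ub (ω + k * vb),
        -(C ((rb : ℂ) * (cb : ℂ) ^ 2) * X),
        -C (Complex.I * (rb : ℂ) * (cb : ℂ) ^ 2 * (k : ℂ))] *
      pml2Ext ub cb rb k σ (ω + k * vb) =
      !![0, Lpml ub cb k σ (ω + k * vb), 0, 0]) ∧
    (∀ P p u v : ℝ → ℂ,
      ContDiff ℝ (⊤ : ℕ∞) P → ContDiff ℝ (⊤ : ℕ∞) p → ContDiff ℝ (⊤ : ℕ∞) u → ContDiff ℝ (⊤ : ℕ∞) v →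
      (∀ x : ℝ, (ub : ℂ) * deriv P x + Complex.I * ((ω + k * vb : ℝ) : ℂ) * P x - p x = 0) →
      (∀ x : ℝ, app2 (Lpml ub cb k σ (ω + k * vb) - Lhat ub cb k (ω + k * vb)) P x +
        (ub : ℂ) * deriv p x + Complex.I * ((ω + k * vb : ℝ) : ℂ) * p x +
        (rb : ℂ) * (cb : ℂ) ^ 2 * deriv u x +
        Complex.I * (rb : ℂ) * (cb : ℂ) ^ 2 * (k : ℂ) * v x = 0) →
      (∀ x : ℝ, (rb : ℂ)⁻¹ * deriv p x + (ub : ℂ) * deriv u x +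
        Complex.I * ((ω + k * vb : ℝ) : ℂ) * u x = 0) →
      (∀ x : ℝ, Complex.I * (k : ℂ) / (rb : ℂ) * p x + (ub : ℂ) * deriv v x +
        Complex.I * ((ω + k * vb : ℝ) : ℂ) * v x = 0) →
      ∀ x : ℝ, app2 (Lpml ub cb k σ (ω + k * vb)) p x = 0) :=
  ⟨aux_matrix ub cb rb k σ (ω + k * vb) hr,
   fun P p u v hP hp hu hv e1 e2 e3 e4 =>
     aux_pde ub cb rb ω k vb σ hc hr P p u v hP hp hu hv e1 e2 e3 e4⟩
end

section
/- Let Âₑₓₜ be the Fourier transform of the extended second PML model, i.e. the 4 × 4 matrix over ℂ[X]: Âₑₓₜ = [[Ĝ, −1, 0, 0], [L̂ᵖᵐˡ − L̂, Ĝ, ρ̄·c̄²·X, i·ρ̄·c̄²·k], [0, X/ρ̄, Ĝ, 0], [0, i·k/ρ̄, 0, Ĝ]]. Then det Âₑₓₜ = Ĝ² · L̂ᵖᵐˡ in ℂ[X]. -/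
open Polynomial Matrix Complex

theorem aux_det {R : Type*} [CommRing R] (g d b1 b2 c1 c2 : R) :
    (!![g, -1, 0, 0; d, g, b1, b2; 0, c1, g, 0; 0, c2, 0, g] :
      Matrix (Fin 4) (Fin 4) R).det = g ^ 2 * (g ^ 2 - b1 * c1 - b2 * c2 + d) := by
  simp [Matrix.det_succ_row_zero, Fin.sum_univ_succ, Fin.succAbove]
  ring

/-- The determinant of the Fourier transform of the extended second PML model factors as
`det Âₑₓₜ = Ĝ² · L̂ᵖᵐˡ` in `ℂ[X]`. -/
theorem pml2Ext_det (ub vb cb rb ω k σ : ℝ)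
    (hc : 0 < cb) (hr : 0 < rb) (hσ : 0 ≤ σ)
    (hsub : ub ^ 2 < cb ^ 2) (hΩ : ω + k * vb ≠ 0) :
    (pml2Ext ub cb rb k σ (ω + k * vb)).det =
      Ghat ub (ω + k * vb) ^ 2 * Lpml ub cb k σ (ω + k * vb) := by
  have hrb : (rb : ℂ) ≠ 0 := by exact_mod_cast hr.ne'
  rw [pml2Ext, aux_det]
  have h1 : C ((rb : ℂ) * (cb : ℂ) ^ 2) * X * (C ((rb : ℂ)⁻¹) * X)
      = C ((cb : ℂ) ^ 2) * X ^ 2 := by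
    have hc1 : C ((rb : ℂ) * (cb : ℂ) ^ 2) * C ((rb : ℂ)⁻¹) = C ((cb : ℂ) ^ 2) := by
      rw [← C_mul]
      congr 1
      field_simp
    linear_combination (X ^ 2 : Polynomial ℂ) * hc1
  have h2 : C (Complex.I * (rb : ℂ) * (cb : ℂ) ^ 2 * (k : ℂ)) *
      C (Complex.I * (k : ℂ) / (rb : ℂ)) = C (-((cb : ℂ) ^ 2 * (k : ℂ) ^ 2)) := by
    rw [← C_mul]
    congr 1
    field_simp
    linear_combination (cb:ℂ)^2 * (k:ℂ)^2 * Complex.I_sq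
  rw [h1, h2]
  have hL : Ghat ub (ω + k * vb) ^ 2 - C ((cb : ℂ) ^ 2) * X ^ 2 -
      C (-((cb : ℂ) ^ 2 * (k : ℂ) ^ 2)) +
      (Lpml ub cb k σ (ω + k * vb) - Lhat ub cb k (ω + k * vb))
      = Lpml ub cb k σ (ω + k * vb) := by
    rw [Lhat]
    simp only [Polynomial.C_neg, Polynomial.C_mul, Polynomial.C_pow]
    ring
  rw [hL]
end
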